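/- arXiv:2305.18512 — 2 statements merged into one kernel-verified Lean document; each statement's English description precedes it below -/
import Mathlib

section
/- Let T be a trace-class non-negative self-adjoint operator whose decreasing eigenvalues satisfy λ_m ≤ c·m^{−α} for some α > 1 and c > 0. Then for every λ > 0, tr(T + λI − (T² + λ²I)^{1/2}) ≤ (c^{1/α}/(1 − 1/α))·λ^{1−1/α}. -/
open intervalIntegral Set

/-- If the decreasing eigenvalues λ_m of a trace-class non-negative
self-adjoint operator T satisfy λ_m ≤ c m^{-α} with α > 1, then
tr(T + λI − (T²+λ²I)^{1/2}) = Σ_m (λ_m + λ − √(λ_m² + λ²)) ≤ (c^{1/α}/(1−1/α)) λ^{1−1/α}.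
(Sequence formulation: eigenvalues indexed from m = 1, i.e. `ev m` is λ_{m+1}.) -/
theorem stmt1 (ev : ℕ → ℝ) (hpos : ∀ m, 0 ≤ ev m) (hmono : Antitone ev)
    (c α : ℝ) (hc : 0 < c) (hα : 1 < α)
    (hev : ∀ m : ℕ, ev m ≤ c * ((m + 1 : ℝ)) ^ (-α)) (lam : ℝ) (hlam : 0 < lam) :
    ∑' m : ℕ, (ev m + lam - Real.sqrt ((ev m) ^ 2 + lam ^ 2)) ≤
      (c ^ (1 / α) / (1 - 1 / α)) * lam ^ (1 - 1 / α) := by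
  have hα0 : (0:ℝ) < α := by linarith
  have hα1 : (0:ℝ) < α - 1 := by linarith
  set t0 : ℝ := (c / lam) ^ (1 / α) with ht0def
  have hclam : (0:ℝ) < c / lam := div_pos hc hlam
  have ht0pos : 0 < t0 := Real.rpow_pos_of_pos hclam _
  -- the comparison function
  set g : ℝ → ℝ := fun t => if t ≤ 0 then lam else min lam (c * t ^ (-α)) with hgdef
  have hg_le_lam : ∀ t, g t ≤ lam := by
    intro t
    simp only [hgdef]
    split
    · exact le_rfl
    · exact min_le_left _ _
  have hg_le_pow : ∀ t, 0 < t → g t ≤ c * t ^ (-α) := by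
    intro t ht
    simp only [hgdef, if_neg (not_le.2 ht)]
    exact min_le_right _ _
  have hg_anti : Antitone g := by
    intro s t hst
    simp only [hgdef]
    by_cases hs : s ≤ 0
    · rw [if_pos hs]
      split
      · exact le_rfl
      · exact min_le_left _ _
    · push_neg at hs
      rw [if_neg (not_le.2 hs), if_neg (not_le.2 (lt_of_lt_of_le hs hst))]
      exact min_le_min le_rfl (mul_le_mul_of_nonneg_left
        (Real.rpow_le_rpow_of_nonpos hs hst (by linarith)) hc.le)
  -- key per-term bound
  have hterm : ∀ m : ℕ, ev m + lam - Real.sqrt ((ev m) ^ 2 + lam ^ 2) ≤ g ((m:ℝ) + 1) := by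
    intro m
    have hm1 : (0:ℝ) < (m:ℝ) + 1 := by positivity
    have hge : g ((m:ℝ) + 1) = min lam (c * ((m:ℝ) + 1) ^ (-α)) := by
      simp only [hgdef, if_neg (not_le.2 hm1)]
    rw [hge]
    have h1 : ev m ≤ Real.sqrt ((ev m) ^ 2 + lam ^ 2) := by
      have := Real.sqrt_le_sqrt (show (ev m)^2 ≤ (ev m)^2 + lam^2 by nlinarith [sq_nonneg lam])
      rwa [Real.sqrt_sq (hpos m)] at this
    have h2 : lam ≤ Real.sqrt ((ev m) ^ 2 + lam ^ 2) := by
      have := Real.sqrt_le_sqrt (show lam^2 ≤ (ev m)^2 + lam^2 by nlinarith [sq_nonneg (ev m)])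
      rwa [Real.sqrt_sq hlam.le] at this
    refine le_min (by linarith) ?_
    calc ev m + lam - Real.sqrt ((ev m) ^ 2 + lam ^ 2) ≤ ev m := by linarith
    _ ≤ c * ((m:ℝ) + 1) ^ (-α) := hev m
  have hint : ∀ a b : ℝ, IntervalIntegrable g MeasureTheory.volume a b :=
    fun a b => (hg_anti.antitoneOn _).intervalIntegrable
  -- rewriting the bound
  have hBound : (c ^ (1 / α) / (1 - 1 / α)) * lam ^ (1 - 1 / α) =
      t0 * lam + c / (α - 1) * t0 ^ (1 - α) := by
    have h2 : t0 * lam = c ^ (1/α) * lam ^ (1 - 1/α) := by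
      rw [ht0def, Real.div_rpow hc.le hlam.le, div_mul_eq_mul_div, mul_div_assoc]
      congr 1
      rw [Real.rpow_sub hlam, Real.rpow_one]
    have h3 : c * t0 ^ (1 - α) = c ^ (1/α) * lam ^ (1 - 1/α) := by
      rw [ht0def, ← Real.rpow_mul hclam.le]
      have he : 1 / α * (1 - α) = 1/α - 1 := by field_simp
      rw [he, Real.div_rpow hc.le hlam.le, Real.rpow_sub hlam, Real.rpow_sub hc,
        Real.rpow_one, Real.rpow_one, Real.rpow_sub hlam, Real.rpow_one]
      have hl : lam ^ (1/α) ≠ 0 := (Real.rpow_pos_of_pos hlam _).ne'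
      field_simp
    have hrw2 : c / (α - 1) * t0 ^ (1 - α) = (c * t0 ^ (1 - α)) / (α - 1) := by ring
    rw [hrw2, h2, h3]
    have hne : (1 - 1/α) ≠ 0 := by
      have : 1/α < 1 := by rw [div_lt_one hα0]; exact hα
      linarith
    field_simp
    ring
  -- bound on the integral of g from 0 to n
  have hIntBound : ∀ n : ℕ,
      (∫ x in (0:ℝ)..(n:ℝ), g x) ≤ t0 * lam + c / (α - 1) * t0 ^ (1 - α) := by
    intro n
    have ht0term : 0 ≤ c / (α - 1) * t0 ^ (1 - α) := by positivity
    by_cases hn : (n:ℝ) ≤ t0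
    · have : (∫ x in (0:ℝ)..(n:ℝ), g x) ≤ ∫ _ in (0:ℝ)..(n:ℝ), lam := by
        apply intervalIntegral.integral_mono_on (by positivity) (hint 0 n)
          intervalIntegrable_const
        intro x _
        exact hg_le_lam x
      rw [intervalIntegral.integral_const, smul_eq_mul, sub_zero] at this
      nlinarith
    · push_neg at hn
      rw [← intervalIntegral.integral_add_adjacent_intervals (hint 0 t0) (hint t0 n)]
      have hpart1 : (∫ x in (0:ℝ)..t0, g x) ≤ t0 * lam := by
        have : (∫ x in (0:ℝ)..t0, g x) ≤ ∫ _ in (0:ℝ)..t0, lam := by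
          apply intervalIntegral.integral_mono_on ht0pos.le (hint 0 t0)
            intervalIntegrable_const
          intro x _
          exact hg_le_lam x
        rw [intervalIntegral.integral_const, smul_eq_mul, sub_zero] at this
        linarith
      have h0mem : (0:ℝ) ∉ Set.uIcc t0 (n:ℝ) := by
        intro hmem
        rcases Set.mem_uIcc.1 hmem with ⟨h1, h2⟩ | ⟨h1, h2⟩ <;> linarith
      have hpart2 : (∫ x in t0..(n:ℝ), g x) ≤ c / (α - 1) * t0 ^ (1 - α) := by
        have hmono2 : (∫ x in t0..(n:ℝ), g x) ≤ ∫ x in t0..(n:ℝ), c * x ^ (-α) := by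
          apply intervalIntegral.integral_mono_on hn.le (hint t0 n)
            ((intervalIntegrable_rpow (Or.inr h0mem)).const_mul c)
          intro x hx
          exact hg_le_pow x (lt_of_lt_of_le ht0pos hx.1)
        have hcomp : (∫ x in t0..(n:ℝ), c * x ^ (-α)) =
            c * (((n:ℝ) ^ (-α + 1) - t0 ^ (-α + 1)) / (-α + 1)) := by
          rw [intervalIntegral.integral_const_mul,
            integral_rpow (Or.inr ⟨by intro h; rw [neg_inj] at h; linarith, h0mem⟩)]
        have hkey : ((n:ℝ) ^ (-α + 1) - t0 ^ (-α + 1)) / (-α + 1) ≤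
            t0 ^ (1 - α) / (α - 1) := by
          have h2' : (1 - α : ℝ) = -α + 1 := by ring
          have hnn : 0 ≤ (n:ℝ) ^ (-α + 1) := Real.rpow_nonneg (by positivity) _
          have hrw : ((n:ℝ) ^ (-α + 1) - t0 ^ (-α + 1)) / (-α + 1) =
              (t0 ^ (-α + 1) - (n:ℝ) ^ (-α + 1)) / (α - 1) := by
            rw [div_eq_div_iff (by linarith) (by linarith)]
            ring
          rw [hrw, h2']
          gcongr
          exact sub_le_self _ hnn
        calc (∫ x in t0..(n:ℝ), g x) ≤ c * (((n:ℝ) ^ (-α + 1) - t0 ^ (-α + 1)) / (-α + 1)) := by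
              rw [← hcomp]; exact hmono2
        _ ≤ c * (t0 ^ (1 - α) / (α - 1)) := by
              exact mul_le_mul_of_nonneg_left hkey hc.le
        _ = c / (α - 1) * t0 ^ (1 - α) := by ring
      linarith
  -- sum over range n
  rw [hBound]
  apply Real.tsum_le_of_sum_range_le
  · intro m
    have hle : (ev m)^2 + lam^2 ≤ (ev m + lam)^2 := by nlinarith [hpos m, hlam.le]
    have h1 := (Real.sqrt_le_sqrt hle).trans_eq
      (Real.sqrt_sq (by nlinarith [hpos m, hlam.le]))
    linarith
  · intro n
    calc ∑ i ∈ Finset.range n, (ev i + lam - Real.sqrt ((ev i) ^ 2 + lam ^ 2))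
        ≤ ∑ i ∈ Finset.range n, g ((0:ℝ) + ((i + 1 : ℕ) : ℝ)) := by
          apply Finset.sum_le_sum
          intro i _
          have : ((0:ℝ) + ((i + 1 : ℕ) : ℝ)) = (i:ℝ) + 1 := by push_cast; ring
          rw [this]
          exact hterm i
      _ ≤ ∫ x in (0:ℝ)..((0:ℝ) + (n:ℝ)), g x :=
          AntitoneOn.sum_le_integral (hg_anti.antitoneOn _)
      _ = ∫ x in (0:ℝ)..(n:ℝ), g x := by rw [zero_add]
      _ ≤ t0 * lam + c / (α - 1) * t0 ^ (1 - α) := hIntBound n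
end

section
/- For positive semidefinite matrices T, T̂ and λ > 0, the function g(T̂) = tr((T^{1/2} T̂ T^{1/2} + λ²I)^{1/2} − λI) is Lipschitz in the Hilbert-Schmidt norm with constant ‖T‖₂/(2λ): |g(T̂) − g(T̂')| ≤ (‖T‖₂/(2λ))·‖T̂ − T̂'‖₂. -/
/-! With `S = √T` and `M = S X S + λ²`, the map `X ↦ tr √M` is concave with gradient
`½ S M^{-1/2} S`: the tangent-line inequality
`2 (tr √M' - tr √M) ≤ tr (M^{-1/2} (M' - M))` is `tr (M^{-1/2} (√M' - √M)²) ≥ 0` expanded.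
Since `M ≥ λ²`, the gradient lies between `0` and `T / (2λ)` in the Loewner order, so its
Frobenius norm is at most `‖T‖₂ / (2λ)`, and Cauchy–Schwarz for `(A, B) ↦ tr (Aᵀ B)` gives the
bound on `g(X') - g(X)`; exchanging `X` and `X'` gives the absolute value. -/

open Matrix Classical

/-- Square root of a positive semidefinite matrix (0 if not PSD). -/
noncomputable def psqrt {d : ℕ} (A : Matrix (Fin d) (Fin d) ℝ) : Matrix (Fin d) (Fin d) ℝ :=
  if h : A.PosSemidef then
    (h.1.eigenvectorUnitary : Matrix (Fin d) (Fin d) ℝ) *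
      diagonal ((↑) ∘ (√·) ∘ h.1.eigenvalues) *
      (star h.1.eigenvectorUnitary : Matrix (Fin d) (Fin d) ℝ)
  else 0

/-- Frobenius (Hilbert-Schmidt) norm. -/
noncomputable def frob {m n : ℕ} (A : Matrix (Fin m) (Fin n) ℝ) : ℝ :=
  Real.sqrt ((Aᵀ * A).trace)

open scoped MatrixOrder

section CFC

variable {A : Type*} [TopologicalSpace A] [Ring A] [StarRing A] [PartialOrder A]
  [StarOrderedRing A] [Algebra ℝ A] [ContinuousFunctionalCalculus ℝ A IsSelfAdjoint] {a : A}

lemma cfc_inv_sqrt_nonneg : 0 ≤ cfc (fun x => (√x)⁻¹) a :=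
  cfc_nonneg fun x _ => inv_nonneg.2 (Real.sqrt_nonneg x)

variable [NonnegSpectrumClass ℝ A]

lemma cfc_sqrt_mul_self (ha : 0 ≤ a) : cfc Real.sqrt a * cfc Real.sqrt a = a :=
  calc cfc Real.sqrt a * cfc Real.sqrt a = cfc (fun x => √x * √x) a := (cfc_mul ..).symm
    _ = cfc (fun x => x) a :=
        cfc_congr fun _ hx => Real.mul_self_sqrt (spectrum_nonneg_of_nonneg ha hx)
    _ = a := cfc_id' ℝ a

variable {c : ℝ} (hc : 0 < c) (ha : IsSelfAdjoint a) (h : algebraMap ℝ A (c ^ 2) ≤ a)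
include hc ha h

lemma sqrt_pos_of_mem_spectrum {x : ℝ} (hx : x ∈ spectrum ℝ a) : 0 < √x :=
  Real.sqrt_pos.2 <| (pow_pos hc 2).trans_le ((algebraMap_le_iff_le_spectrum ha).1 h x hx)

lemma continuousOn_inv_sqrt_spectrum : ContinuousOn (fun x => (√x)⁻¹) (spectrum ℝ a) :=
  Real.continuous_sqrt.continuousOn.inv₀ fun _ hx => (sqrt_pos_of_mem_spectrum hc ha h hx).ne'

lemma cfc_inv_sqrt_mul_cfc_sqrt : cfc (fun x => (√x)⁻¹) a * cfc Real.sqrt a = 1 := by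
  rw [← cfc_mul _ _ a (continuousOn_inv_sqrt_spectrum hc ha h), ← cfc_one ℝ a]
  exact cfc_congr fun x hx => inv_mul_cancel₀ (sqrt_pos_of_mem_spectrum hc ha h hx).ne'

lemma cfc_inv_sqrt_le : cfc (fun x => (√x)⁻¹) a ≤ algebraMap ℝ A c⁻¹ := by
  refine cfc_le_algebraMap _ _ _ (fun x hx => inv_anti₀ hc ?_)
    (continuousOn_inv_sqrt_spectrum hc ha h)
  exact Real.le_sqrt_of_sq_le ((algebraMap_le_iff_le_spectrum ha).1 h x hx)

end CFC

namespace Matrix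

variable {n : Type*} [Fintype n] [DecidableEq n]

lemma trace_mul_nonneg {A B : Matrix n n ℝ} (hA : 0 ≤ A) (hB : 0 ≤ B) : 0 ≤ (A * B).trace := by
  set s := cfc Real.sqrt B
  have hs : IsSelfAdjoint s := cfc_predicate _ _
  calc 0 ≤ (star s * A * s).trace := (star_left_conjugate_nonneg hA s).posSemidef.trace_nonneg
    _ = (A * B).trace := by
      rw [hs.star_eq, Matrix.mul_assoc, trace_mul_comm, Matrix.mul_assoc, cfc_sqrt_mul_self hB]

lemma two_mul_trace_sub_le_of_mul_eq_one {P Q R : Matrix n n ℝ} (hP : IsSelfAdjoint P)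
    (hQ : IsSelfAdjoint Q) (hR : 0 ≤ R) (hRP : R * P = 1) :
    2 * (Q.trace - P.trace) ≤ (R * (Q * Q - P * P)).trace := by
  have hPR : P * R = 1 := mul_eq_one_comm.1 hRP
  have hC : IsSelfAdjoint (Q - P) := hQ.sub hP
  have hRQP : (R * (Q * P)).trace = Q.trace := by
    rw [← Matrix.mul_assoc, trace_mul_comm, ← Matrix.mul_assoc, hPR, Matrix.one_mul]
  have hRP' (X : Matrix n n ℝ) : R * (P * X) = X := by rw [← Matrix.mul_assoc, hRP, Matrix.one_mul]
  have hexpand : R * ((Q - P) * (Q - P)) =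
      R * (Q * Q - P * P) - R * (Q * P) - R * (P * Q) + R * (P * P) + R * (P * P) := by
    noncomm_ring
  have hnonneg : 0 ≤ (R * ((Q - P) * (Q - P))).trace :=
    calc 0 ≤ (star (Q - P) * R * (Q - P)).trace :=
          (star_left_conjugate_nonneg hR _).posSemidef.trace_nonneg
      _ = _ := by rw [hC.star_eq, Matrix.mul_assoc, trace_mul_comm, Matrix.mul_assoc]
  rw [hexpand, trace_add, trace_add, trace_sub, trace_sub, hRQP, hRP', hRP'] at hnonneg
  linarith

end Matrix

section Frobenius

variable {m n : ℕ}

lemma frob_eq_norm_vec (A : Matrix (Fin m) (Fin n) ℝ) : frob A = ‖WithLp.toLp 2 A.vec‖ := by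
  rw [frob, ← vec_dotProduct_vec, ← Real.sqrt_sq (norm_nonneg _), ← real_inner_self_eq_norm_sq,
    EuclideanSpace.inner_eq_star_dotProduct]
  rfl

lemma trace_transpose_mul_eq_inner (A B : Matrix (Fin m) (Fin n) ℝ) :
    (Aᵀ * B).trace = inner ℝ (WithLp.toLp 2 A.vec) (WithLp.toLp 2 B.vec) := by
  rw [EuclideanSpace.inner_eq_star_dotProduct, ← vec_dotProduct_vec, dotProduct_comm]
  rfl

lemma abs_trace_transpose_mul_le (A B : Matrix (Fin m) (Fin n) ℝ) :
    |(Aᵀ * B).trace| ≤ frob A * frob B := by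
  rw [trace_transpose_mul_eq_inner, frob_eq_norm_vec, frob_eq_norm_vec]
  exact abs_real_inner_le_norm _ _

lemma frob_smul (c : ℝ) (A : Matrix (Fin m) (Fin n) ℝ) : frob (c • A) = |c| * frob A := by
  rw [frob_eq_norm_vec, frob_eq_norm_vec, vec_smul, WithLp.toLp_smul, norm_smul, Real.norm_eq_abs]

lemma frob_sub_comm (A B : Matrix (Fin m) (Fin n) ℝ) : frob (A - B) = frob (B - A) := by
  rw [frob_eq_norm_vec, frob_eq_norm_vec, vec_sub, vec_sub, WithLp.toLp_sub, WithLp.toLp_sub,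
    norm_sub_rev]

lemma frob_le_frob_of_le {A B : Matrix (Fin n) (Fin n) ℝ} (hA : 0 ≤ A) (hAB : A ≤ B) :
    frob A ≤ frob B := by
  have hB : 0 ≤ B := hA.trans hAB
  refine Real.sqrt_le_sqrt ?_
  rw [← conjTranspose_eq_transpose_of_trivial, ← conjTranspose_eq_transpose_of_trivial,
    hA.posSemidef.1, hB.posSemidef.1]
  have : (B * B).trace - (A * A).trace = ((B - A) * (B + A)).trace := by
    rw [Matrix.sub_mul, Matrix.mul_add, Matrix.mul_add, trace_sub, trace_add, trace_add,
      trace_mul_comm A B]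
    ring
  linarith [trace_mul_nonneg (sub_nonneg.2 hAB) (add_nonneg hB hA)]

end Frobenius

lemma psqrt_eq_cfc {d : ℕ} {A : Matrix (Fin d) (Fin d) ℝ} (hA : A.PosSemidef) :
    psqrt A = cfc Real.sqrt A := by
  rw [hA.1.cfc_eq, psqrt, dif_pos hA, IsHermitian.cfc, Unitary.conjStarAlgAut_apply]
  rfl

section Gradient

variable {n : Type*} [Fintype n] [DecidableEq n] {S X Y : Matrix n n ℝ} {c : ℝ}

lemma algebraMap_le_conj_add (hS : IsSelfAdjoint S) (hX : 0 ≤ X) :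
    algebraMap ℝ (Matrix n n ℝ) (c ^ 2) ≤ S * X * S + c ^ 2 • 1 := by
  rw [Algebra.algebraMap_eq_smul_one, ← sub_nonneg, add_sub_cancel_right]
  simpa only [hS.star_eq] using star_left_conjugate_nonneg hX S

lemma conj_add_nonneg (hS : IsSelfAdjoint S) (hX : 0 ≤ X) : 0 ≤ S * X * S + c ^ 2 • 1 :=
  (algebraMap_nonneg _ (sq_nonneg c)).trans (algebraMap_le_conj_add hS hX)

lemma two_mul_trace_cfc_sqrt_sub_le (hS : IsSelfAdjoint S) (hX : 0 ≤ X) (hY : 0 ≤ Y) (hc : 0 < c) :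
    2 * ((cfc Real.sqrt (S * Y * S + c ^ 2 • 1)).trace -
        (cfc Real.sqrt (S * X * S + c ^ 2 • 1)).trace) ≤
      (S * cfc (fun x => (√x)⁻¹) (S * X * S + c ^ 2 • 1) * S * (Y - X)).trace := by
  have hM := conj_add_nonneg (c := c) hS hX
  have hM' := conj_add_nonneg (c := c) hS hY
  have hRP := cfc_inv_sqrt_mul_cfc_sqrt hc hM.isSelfAdjoint (algebraMap_le_conj_add hS hX)
  have hgrad := two_mul_trace_sub_le_of_mul_eq_one (cfc_predicate Real.sqrt _)
    (cfc_predicate Real.sqrt (S * Y * S + c ^ 2 • 1)) cfc_inv_sqrt_nonneg hRP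
  rw [cfc_sqrt_mul_self hM, cfc_sqrt_mul_self hM', add_sub_add_right_eq_sub, ← Matrix.sub_mul,
    ← Matrix.mul_sub, ← Matrix.mul_assoc, trace_mul_comm] at hgrad
  simpa only [Matrix.mul_assoc] using hgrad

lemma conj_cfc_inv_sqrt_nonneg {M : Matrix n n ℝ} (hS : IsSelfAdjoint S) :
    0 ≤ S * cfc (fun x => (√x)⁻¹) M * S := by
  simpa only [hS.star_eq] using star_left_conjugate_nonneg cfc_inv_sqrt_nonneg S

end Gradient

lemma frob_conj_cfc_inv_sqrt_le {d : ℕ} {S M : Matrix (Fin d) (Fin d) ℝ} {c : ℝ}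
    (hS : IsSelfAdjoint S) (hM : IsSelfAdjoint M) (hc : 0 < c) (hMc : algebraMap ℝ _ (c ^ 2) ≤ M) :
    frob (S * cfc (fun x => (√x)⁻¹) M * S) ≤ frob (S * S) / c := by
  have hGT : S * cfc (fun x => (√x)⁻¹) M * S ≤ c⁻¹ • (S * S) := by
    simpa only [hS.star_eq, Algebra.algebraMap_eq_smul_one, Matrix.mul_smul, Matrix.smul_mul,
      Matrix.mul_one] using star_left_conjugate_le_conjugate (cfc_inv_sqrt_le hc hM hMc) S
  calc frob (S * cfc (fun x => (√x)⁻¹) M * S) ≤ frob (c⁻¹ • (S * S)) :=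
        frob_le_frob_of_le (conj_cfc_inv_sqrt_nonneg hS) hGT
    _ = frob (S * S) / c := by rw [frob_smul, abs_of_pos (inv_pos.2 hc), inv_mul_eq_div]

theorem trace_psqrt_conj_add_sub_le {d : ℕ} {T X Y : Matrix (Fin d) (Fin d) ℝ}
    (hT : T.PosSemidef) (hX : X.PosSemidef) (hY : Y.PosSemidef) {c : ℝ} (hc : 0 < c) :
    (psqrt (psqrt T * Y * psqrt T + c ^ 2 • 1)).trace -
        (psqrt (psqrt T * X * psqrt T + c ^ 2 • 1)).trace ≤
      frob T / (2 * c) * frob (Y - X) := by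
  rw [psqrt_eq_cfc hT]
  set S := cfc Real.sqrt T
  have hS : IsSelfAdjoint S := cfc_predicate _ _
  have hSS : S * S = T := cfc_sqrt_mul_self hT.nonneg
  rw [psqrt_eq_cfc (conj_add_nonneg hS hX.nonneg).posSemidef,
    psqrt_eq_cfc (conj_add_nonneg hS hY.nonneg).posSemidef]
  have hgrad := two_mul_trace_cfc_sqrt_sub_le hS hX.nonneg hY.nonneg hc
  have hG := frob_conj_cfc_inv_sqrt_le hS (conj_add_nonneg hS hX.nonneg).isSelfAdjoint hc
    (algebraMap_le_conj_add hS hX.nonneg)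
  set G := S * cfc (fun x => (√x)⁻¹) (S * X * S + c ^ 2 • 1) * S
  have hGt : Gᵀ = G := by
    rw [← conjTranspose_eq_transpose_of_trivial]
    exact (conj_cfc_inv_sqrt_nonneg hS).posSemidef.1
  have hCS : (G * (Y - X)).trace ≤ frob G * frob (Y - X) := by
    simpa only [hGt] using (le_abs_self _).trans (abs_trace_transpose_mul_le G (Y - X))
  rw [hSS] at hG
  calc _ ≤ frob G * frob (Y - X) / 2 := by linarith
    _ ≤ frob T / c * frob (Y - X) / 2 := by gcongr; exact Real.sqrt_nonneg _
    _ = frob T / (2 * c) * frob (Y - X) := by ring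

/-- g(T̂) = tr((T^{1/2} T̂ T^{1/2} + λ²I)^{1/2} − λI) is
(‖T‖₂/(2λ))-Lipschitz in the Hilbert-Schmidt norm on PSD matrices. -/
theorem stmt7 {d : ℕ} (T That That' : Matrix (Fin d) (Fin d) ℝ)
    (hT : T.PosSemidef) (h1 : That.PosSemidef) (h2 : That'.PosSemidef)
    (lam : ℝ) (hlam : 0 < lam) :
    |(psqrt (psqrt T * That * psqrt T + lam ^ 2 • (1 : Matrix (Fin d) (Fin d) ℝ)) -
        lam • (1 : Matrix (Fin d) (Fin d) ℝ)).trace -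
      (psqrt (psqrt T * That' * psqrt T + lam ^ 2 • (1 : Matrix (Fin d) (Fin d) ℝ)) -
        lam • (1 : Matrix (Fin d) (Fin d) ℝ)).trace| ≤
      frob T / (2 * lam) * frob (That - That') := by
  rw [trace_sub, trace_sub, sub_sub_sub_cancel_right, abs_sub_le_iff]
  constructor
  · exact trace_psqrt_conj_add_sub_le hT h2 h1 hlam
  · rw [frob_sub_comm]
    exact trace_psqrt_conj_add_sub_le hT h1 h2 hlam
end
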